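/- arXiv:1202.3063 — 3 statements merged into one kernel-verified Lean document; each statement's English description precedes it below -/
import Mathlib

section
/- Let β ∈ ℂ with 0 < |β| < 1 and let h : Δ → ℂ be univalent with β·h(Δ) ⊆ h(Δ). Fix x₀ ∈ Δ and let x₁ ∈ Δ be the (unique) point with h(x₁) = β·h(x₀). Then |β|·|h'(x₀)|·(1−|x₀|²) ≤ |h'(x₁)|·(1−|x₁|²). -/
/-!
`F := h⁻¹ ∘ (β • h)` is a self-map of the disk with `F x₀ = x₁`, and it is holomorphic with
`F' x₀ = β h'(x₀) / h'(x₁)` because a univalent function has no critical points: near a critical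
point `z₀`, `h - h z₀` is the `m`-th power (`m ≥ 2`) of a local coordinate, so `h` is `m`-to-one
there. The inequality is then the Schwarz–Pick bound `|F'(x₀)| (1 - |x₀|²) ≤ 1 - |F x₀|²`, which
is Schwarz's lemma for `F` conjugated by the involutions of the disk exchanging `0` with `x₀`
and with `x₁`.
-/

open Complex Metric Set Filter
open scoped Topology ComplexConjugate

theorem AnalyticAt.exists_eventually_pow_eq {g : ℂ → ℂ} {z₀ : ℂ} (hg : AnalyticAt ℂ g z₀)
    (hg₀ : g z₀ ≠ 0) {n : ℕ} (hn : n ≠ 0) :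
    ∃ ψ : ℂ → ℂ, AnalyticAt ℂ ψ z₀ ∧ ψ z₀ ≠ 0 ∧ ∀ᶠ z in 𝓝 z₀, ψ z ^ n = g z := by
  obtain ⟨c, hc⟩ : ∃ c : ℂ, c ^ n = g z₀ := ⟨_, cpow_nat_inv_pow _ hn⟩
  have hc₀ : c ≠ 0 := by rintro rfl; exact hg₀ (by rw [← hc, zero_pow hn])
  -- `z ↦ log (g z / g z₀)` is analytic near `z₀` since `g z / g z₀` stays near `1`.
  refine ⟨fun z => c * Complex.exp ((n : ℂ)⁻¹ * Complex.log (g z / g z₀)), ?_, by simp [hc₀], ?_⟩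
  · exact analyticAt_const.mul ((analyticAt_const.mul ((hg.div analyticAt_const hg₀).clog
      (by simp [hg₀, one_mem_slitPlane]))).cexp)
  · filter_upwards [hg.continuousAt.eventually_ne hg₀] with z hz
    rw [mul_pow, hc, ← exp_nat_mul, ← mul_assoc, mul_inv_cancel₀ (Nat.cast_ne_zero.mpr hn),
      one_mul, exp_log (div_ne_zero hz hg₀), mul_div_cancel₀ _ hg₀]

theorem not_injOn_pow_of_hasStrictDerivAt {φ : ℂ → ℂ} {φ' z₀ : ℂ} {s : Set ℂ} {m : ℕ}
    (hφ : HasStrictDerivAt φ φ' z₀) (hφ' : φ' ≠ 0) (hφ₀ : φ z₀ = 0) (hm : 2 ≤ m)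
    (hs : s ∈ 𝓝 z₀) : ¬InjOn (fun z => φ z ^ m) s := by
  intro hinj
  set ζ : ℂ := exp (2 * Real.pi * I / m)
  have hζ : IsPrimitiveRoot ζ m := isPrimitiveRoot_exp m (by omega)
  have himage : φ '' s ∈ 𝓝 (0 : ℂ) := by
    rw [← hφ₀, ← hφ.map_nhds_eq hφ']
    exact image_mem_map hs
  have hrot : Tendsto (ζ * ·) (𝓝 (0 : ℂ)) (𝓝 0) := by
    simpa using (continuous_const_mul ζ).tendsto 0
  obtain ⟨y, ⟨⟨a, ha, rfl⟩, b, hb, hab⟩, hy⟩ :=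
    (((Filter.Eventually.and himage (hrot himage)).filter_mono (nhdsWithin_le_nhds (s := {0}ᶜ))).and
      self_mem_nhdsWithin).exists
  have : a = b := hinj ha hb (by simp only [hab, mul_pow, hζ.pow_eq_one, one_mul])
  subst this
  exact hζ.ne_one (by omega) (mul_right_cancel₀ hy (hab.symm.trans (one_mul (φ a)).symm))

theorem deriv_ne_zero_of_injOn {f : ℂ → ℂ} {s : Set ℂ} {z₀ : ℂ} (hf : AnalyticAt ℂ f z₀)
    (hs : s ∈ 𝓝 z₀) (hinj : InjOn f s) : deriv f z₀ ≠ 0 := by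
  intro hder
  have hf₀ : AnalyticAt ℂ (f · - f z₀) z₀ := hf.sub analyticAt_const
  have hord : ((2 : ℕ) : ℕ∞) ≤ analyticOrderAt (f · - f z₀) z₀ := by
    rw [natCast_le_analyticOrderAt_iff_iteratedDeriv_eq_zero hf₀]
    intro i hi
    interval_cases i <;> simp [hder]
  have htop : analyticOrderAt (f · - f z₀) z₀ ≠ ⊤ := by
    rw [Ne, analyticOrderAt_eq_top]
    intro hconst
    obtain ⟨z, ⟨hz, hzs⟩, hne⟩ :=
      ((hconst.and hs).filter_mono (nhdsWithin_le_nhds (s := {z₀}ᶜ))).and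
        self_mem_nhdsWithin |>.exists
    exact hne (hinj hzs (mem_of_mem_nhds hs) (sub_eq_zero.mp hz))
  obtain ⟨m, hm⟩ := ENat.ne_top_iff_exists.mp htop
  rw [← hm, Nat.cast_le] at hord
  obtain ⟨g, hg, hg₀, hfg⟩ := hf₀.analyticOrderAt_eq_natCast.mp hm.symm
  obtain ⟨ψ, hψ, hψ₀, hψg⟩ := hg.exists_eventually_pow_eq hg₀ (n := m) (by omega)
  have hφ : HasStrictDerivAt (fun z => (z - z₀) * ψ z) (ψ z₀) z₀ := by
    simpa using HasStrictDerivAt.fun_mul ((hasStrictDerivAt_id z₀).sub_const z₀) hψ.hasStrictDerivAt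
  have hpow : ∀ x ∈ s ∩ {x | f x - f z₀ = (x - z₀) ^ m • g x ∧ ψ x ^ m = g x},
      f x = f z₀ + ((x - z₀) * ψ x) ^ m := by
    rintro x ⟨-, hx, hψx⟩
    rw [mul_pow, hψx, ← smul_eq_mul, ← hx]
    ring
  refine not_injOn_pow_of_hasStrictDerivAt hφ hψ₀ (by simp) hord
    (inter_mem hs (hfg.and hψg)) fun a ha b hb hab => hinj ha.1 hb.1 ?_
  rw [hpow a ha, hpow b hb]
  exact congrArg _ hab

noncomputable def diskInvolution (a z : ℂ) : ℂ := (a - z) / (1 - conj a * z)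

theorem norm_one_sub_conj_mul_sq_sub_norm_sub_sq (a z : ℂ) :
    ‖1 - conj a * z‖ ^ 2 - ‖a - z‖ ^ 2 = (1 - ‖a‖ ^ 2) * (1 - ‖z‖ ^ 2) := by
  simp only [Complex.sq_norm, normSq_apply, sub_re, sub_im, mul_re, mul_im, conj_re, conj_im,
    one_re, one_im]
  ring

theorem one_sub_conj_mul_ne_zero {a z : ℂ} (ha : ‖a‖ < 1) (hz : ‖z‖ ≤ 1) :
    1 - conj a * z ≠ 0 := by
  rw [sub_ne_zero, ne_comm]
  refine ne_of_apply_ne norm (ne_of_lt ?_)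
  rw [norm_mul, norm_conj, norm_one]
  exact mul_lt_one_of_nonneg_of_lt_one_left (norm_nonneg a) ha hz

theorem mapsTo_diskInvolution {a : ℂ} (ha : ‖a‖ < 1) :
    MapsTo (diskInvolution a) (ball 0 1) (ball 0 1) := by
  intro z hz
  rw [mem_ball_zero_iff] at hz ⊢
  have hden := one_sub_conj_mul_ne_zero ha hz.le
  rw [diskInvolution, norm_div, div_lt_one (norm_pos_iff.mpr hden), ← sq_lt_sq₀ (norm_nonneg _)
    (norm_nonneg _), ← sub_pos, norm_one_sub_conj_mul_sq_sub_norm_sub_sq]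
  have := norm_nonneg a
  have := norm_nonneg z
  exact mul_pos (by nlinarith) (by nlinarith)

theorem hasDerivAt_diskInvolution {a z : ℂ} (hz : 1 - conj a * z ≠ 0) :
    HasDerivAt (diskInvolution a) ((‖a‖ ^ 2 - 1) / (1 - conj a * z) ^ 2) z := by
  have h := ((hasDerivAt_id z).const_sub a).fun_div
    (((hasDerivAt_id z).const_mul (conj a)).const_sub 1) hz
  refine (h.congr_deriv ?_ : _)
  simp only [id, ← conj_mul']
  ring

theorem diskInvolution_zero (a : ℂ) : diskInvolution a 0 = a := by
  simp [diskInvolution]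

theorem diskInvolution_self (a : ℂ) : diskInvolution a a = 0 := by
  simp [diskInvolution]

theorem norm_deriv_diskInvolution_zero {a : ℂ} (ha : ‖a‖ ≤ 1) :
    ‖deriv (diskInvolution a) 0‖ = 1 - ‖a‖ ^ 2 := by
  rw [(hasDerivAt_diskInvolution (by simp)).deriv, mul_zero, sub_zero, one_pow, div_one,
    ← ofReal_pow, ← ofReal_one, ← ofReal_sub, norm_real,
    Real.norm_of_nonpos (by nlinarith [norm_nonneg a])]
  ring

theorem norm_deriv_diskInvolution_self {a : ℂ} (ha : ‖a‖ < 1) :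
    ‖deriv (diskInvolution a) a‖ = (1 - ‖a‖ ^ 2)⁻¹ := by
  have h : 0 < 1 - ‖a‖ ^ 2 := by nlinarith [norm_nonneg a]
  rw [(hasDerivAt_diskInvolution (one_sub_conj_mul_ne_zero ha ha.le)).deriv, conj_mul', norm_div,
    norm_pow, ← ofReal_pow, ← ofReal_one, ← ofReal_sub, ← ofReal_sub, norm_real, norm_real,
    Real.norm_of_nonpos (by linarith), Real.norm_of_nonneg h.le]
  field_simp
  ring

theorem norm_deriv_mul_one_sub_sq_le_of_mapsTo_ball {f : ℂ → ℂ}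
    (hd : DifferentiableOn ℂ f (ball 0 1)) (hf : MapsTo f (ball 0 1) (ball 0 1)) {z : ℂ}
    (hz : z ∈ ball 0 1) : ‖deriv f z‖ * (1 - ‖z‖ ^ 2) ≤ 1 - ‖f z‖ ^ 2 := by
  have hz₁ : ‖z‖ < 1 := mem_ball_zero_iff.mp hz
  have hw₁ : ‖f z‖ < 1 := mem_ball_zero_iff.mp (hf hz)
  have hdisk : ∀ {a : ℂ}, ‖a‖ < 1 → DifferentiableOn ℂ (diskInvolution a) (ball 0 1) :=
    fun ha w hw => (hasDerivAt_diskInvolution (one_sub_conj_mul_ne_zero ha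
      (mem_ball_zero_iff.mp hw).le)).differentiableAt.differentiableWithinAt
  set G := diskInvolution (f z) ∘ f ∘ diskInvolution z
  have hG : DifferentiableOn ℂ G (ball 0 1) :=
    (hdisk hw₁).comp (hd.comp (hdisk hz₁) (mapsTo_diskInvolution hz₁))
      (hf.comp (mapsTo_diskInvolution hz₁))
  have hG₀ : G 0 = 0 := by simp [G, diskInvolution_zero, diskInvolution_self]
  have hGmaps : MapsTo G (ball 0 1) (closedBall (G 0) 1) := by
    rw [hG₀]
    exact ((mapsTo_diskInvolution hw₁).comp (hf.comp (mapsTo_diskInvolution hz₁))).mono_right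
      ball_subset_closedBall
  have hderiv : deriv G 0 =
      deriv (diskInvolution (f z)) (f z) * deriv f z * deriv (diskInvolution z) 0 := by
    have h₀ : HasDerivAt (diskInvolution z) (deriv (diskInvolution z) 0) 0 :=
      (hdisk hz₁).hasDerivAt (ball_mem_nhds 0 one_pos)
    have hf' : HasDerivAt f (deriv f z) (diskInvolution z 0) := by
      rw [diskInvolution_zero]
      exact hd.hasDerivAt (isOpen_ball.mem_nhds hz)
    have h₁ : HasDerivAt (diskInvolution (f z)) (deriv (diskInvolution (f z)) (f z))
        (f (diskInvolution z 0)) := by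
      rw [diskInvolution_zero]
      exact (hdisk hw₁).hasDerivAt (isOpen_ball.mem_nhds (hf hz))
    rw [(h₁.comp 0 (hf'.comp 0 h₀)).deriv, mul_assoc]
  have hschwarz := norm_deriv_le_one_of_mapsTo_ball hG hGmaps one_pos
  rw [hderiv, norm_mul, norm_mul, norm_deriv_diskInvolution_self hw₁,
    norm_deriv_diskInvolution_zero hz₁.le] at hschwarz
  have : 0 < 1 - ‖f z‖ ^ 2 := by nlinarith [norm_nonneg (f z)]
  rw [inv_mul_eq_div, div_mul_eq_mul_div, div_le_one this] at hschwarz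
  exact hschwarz

theorem hasDerivAt_of_injOn_of_comp_eq {h g F : ℂ → ℂ} {s : Set ℂ} {z g' : ℂ} (hs : IsOpen s)
    (hh : DifferentiableOn ℂ h s) (hinj : InjOn h s) (hFs : MapsTo F s s)
    (hF : ∀ w ∈ s, h (F w) = g w) (hg : HasDerivAt g g' z) (hz : z ∈ s) :
    HasDerivAt F (g' / deriv h (F z)) z := by
  set y := F z
  have hy : y ∈ s := hFs hz
  have hstrict : HasStrictDerivAt h (deriv h y) y :=
    (hh.analyticAt (hs.mem_nhds hy)).hasStrictDerivAt
  have hne : deriv h y ≠ 0 :=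
    deriv_ne_zero_of_injOn (hh.analyticAt (hs.mem_nhds hy)) (hs.mem_nhds hy) hinj
  set Φ := hstrict.localInverse h (deriv h y) y hne
  have hgz : g z = h y := (hF z hz).symm
  have hgcont : Tendsto g (𝓝 z) (𝓝 (h y)) := hgz ▸ hg.continuousAt.tendsto
  have hΦ : HasDerivAt Φ (deriv h y)⁻¹ (g z) := hgz ▸ (hstrict.to_localInverse hne).hasDerivAt
  have hlocal : F =ᶠ[𝓝 z] Φ ∘ g := by
    have hright : ∀ᶠ w in 𝓝 z, h (Φ (g w)) = g w :=
      hgcont.eventually (hstrict.hasStrictFDerivAt_equiv hne).eventually_right_inverse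
    have hmem : ∀ᶠ w in 𝓝 z, Φ (g w) ∈ s :=
      hgcont.eventually ((hstrict.hasStrictFDerivAt_equiv hne).localInverse_tendsto.eventually
        (hs.eventually_mem hy))
    filter_upwards [hright, hmem, hs.eventually_mem hz] with w hw hΦw hws
    exact hinj (hFs hws) hΦw (by rw [hF w hws, Function.comp_apply, hw])
  rw [div_eq_inv_mul]
  exact (hΦ.comp z hg).congr_of_eventuallyEq hlocal

theorem schwarz_pick_key_inequality_general
    (h : ℂ → ℂ)
    (hdiff : DifferentiableOn ℂ h (ball (0 : ℂ) 1))
    (hinj : InjOn h (ball (0 : ℂ) 1))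
    (β : ℂ)
    (hsub : (fun w => β * w) '' (h '' ball (0 : ℂ) 1) ⊆ h '' ball (0 : ℂ) 1)
    (x₀ : ℂ) (hx₀ : x₀ ∈ ball (0 : ℂ) 1)
    (x₁ : ℂ) (hx₁ : x₁ ∈ ball (0 : ℂ) 1)
    (hx₁eq : h x₁ = β * h x₀) :
    ‖β‖ * ‖deriv h x₀‖ * (1 - ‖x₀‖ ^ 2) ≤
      ‖deriv h x₁‖ * (1 - ‖x₁‖ ^ 2) := by
  set F := fun z => Function.invFunOn h (ball 0 1) (β * h z)
  have hF : ∀ z ∈ ball (0 : ℂ) 1, F z ∈ ball 0 1 ∧ h (F z) = β * h z := fun z hz =>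
    Function.invFunOn_pos (hsub (mem_image_of_mem _ (mem_image_of_mem h hz)))
  have hFx₀ : F x₀ = x₁ := hinj (hF x₀ hx₀).1 hx₁ (by rw [(hF x₀ hx₀).2, hx₁eq])
  have hFderiv : ∀ z ∈ ball (0 : ℂ) 1, HasDerivAt F (β * deriv h z / deriv h (F z)) z :=
    fun z hz => hasDerivAt_of_injOn_of_comp_eq isOpen_ball hdiff hinj (fun w hw => (hF w hw).1)
      (fun w hw => (hF w hw).2)
      ((hdiff.differentiableAt (isOpen_ball.mem_nhds hz)).hasDerivAt.const_mul β) hz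
  have hpick := norm_deriv_mul_one_sub_sq_le_of_mapsTo_ball
    (fun z hz => (hFderiv z hz).differentiableAt.differentiableWithinAt)
    (fun z hz => (hF z hz).1) hx₀
  rw [(hFderiv x₀ hx₀).deriv, hFx₀, norm_div, norm_mul, div_mul_eq_mul_div,
    div_le_iff₀ (norm_pos_iff.mpr (deriv_ne_zero_of_injOn
      (hdiff.analyticAt (isOpen_ball.mem_nhds hx₁)) (isOpen_ball.mem_nhds hx₁) hinj))] at hpick
  linarith

/-- **Key inequality of Theorem 2.** If `h` is univalent on the unit disk, `0 < |β| < 1`,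
`β·h(Δ) ⊆ h(Δ)`, `x₀ ∈ Δ` and `x₁ ∈ Δ` with `h(x₁) = β·h(x₀)`, then
`|β||h'(x₀)|(1-|x₀|²) ≤ |h'(x₁)|(1-|x₁|²)`. -/
theorem schwarz_pick_key_inequality
    (h : ℂ → ℂ)
    (hdiff : DifferentiableOn ℂ h (ball (0 : ℂ) 1))
    (hinj : InjOn h (ball (0 : ℂ) 1))
    (β : ℂ) (hβ0 : 0 < ‖β‖) (hβ1 : ‖β‖ < 1)
    (hsub : (fun w => β * w) '' (h '' ball (0 : ℂ) 1) ⊆ h '' ball (0 : ℂ) 1)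
    (x₀ : ℂ) (hx₀ : x₀ ∈ ball (0 : ℂ) 1)
    (x₁ : ℂ) (hx₁ : x₁ ∈ ball (0 : ℂ) 1)
    (hx₁eq : h x₁ = β * h x₀) :
    ‖β‖ * ‖deriv h x₀‖ * (1 - ‖x₀‖ ^ 2) ≤
      ‖deriv h x₁‖ * (1 - ‖x₁‖ ^ 2) :=
  schwarz_pick_key_inequality_general h hdiff hinj β hsub x₀ hx₀ x₁ hx₁ hx₁eq
end

section
/- Let λ ∈ ℂ with Re λ > 0 and let t > 0. Then (Re λ/|λ|)·|1 − e^{−λt}| ≤ 1 − |e^{−λt}|, and the inequality is strict whenever Im λ ≠ 0. -/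
/-!
Put `w = -λt = x + iy`, so `x < 0`. Since `‖1 - e^w‖² = (1 - e^x)² + 2e^x(1 - cos y)` and
`‖w‖² = x² + y²`, the squared inequality `x²‖1 - e^w‖² ≤ ‖w‖²(1 - e^x)²` reduces to
`x²e^x · 2(1 - cos y) ≤ (e^x - 1)² · y²`. This is the product of `2(1 - cos y) ≤ y²`, strict for
`y ≠ 0`, and `x²e^x ≤ (e^x - 1)²`, which is `|x/2| ≤ |sinh (x/2)|`.
-/

open Complex

lemma Real.sq_le_sinh_sq (x : ℝ) : x ^ 2 ≤ Real.sinh x ^ 2 := by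
  rcases le_total 0 x with hx | hx
  · exact pow_le_pow_left₀ hx (Real.self_le_sinh_iff.mpr hx) 2
  · have h := Real.self_le_sinh_iff.mpr (neg_nonneg.mpr hx)
    rw [Real.sinh_neg] at h
    nlinarith

lemma Real.sq_mul_exp_le_exp_sub_one_sq (x : ℝ) :
    x ^ 2 * Real.exp x ≤ (Real.exp x - 1) ^ 2 := by
  have hsinh : (Real.exp x - 1) ^ 2 = Real.exp x * (2 * Real.sinh (x / 2)) ^ 2 := by
    have hx : Real.exp x = Real.exp (x / 2) ^ 2 := by rw [← Real.exp_nat_mul]; ring_nf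
    have hinv : Real.exp (x / 2) * Real.exp (-(x / 2)) = 1 := by rw [← Real.exp_add]; simp
    rw [Real.sinh_eq, hx]
    linear_combination
      (2 * Real.exp (x / 2) ^ 2 - 1 - Real.exp (x / 2) * Real.exp (-(x / 2))) * hinv
  rw [hsinh]
  nlinarith [Real.sq_le_sinh_sq (x / 2), Real.exp_pos x]

namespace Complex

lemma sq_norm_one_sub_exp (z : ℂ) :
    ‖1 - exp z‖ ^ 2 = (1 - Real.exp z.re) ^ 2 + 2 * Real.exp z.re * (1 - Real.cos z.im) := by
  rw [Complex.sq_norm, normSq_apply]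
  simp only [sub_re, sub_im, one_re, one_im, exp_re, exp_im]
  linear_combination Real.exp z.re ^ 2 * Real.sin_sq_add_cos_sq z.im

lemma sq_norm_mul_one_sub_exp_re (w : ℂ) :
    (‖w‖ * (1 - Real.exp w.re)) ^ 2 =
      w.re ^ 2 * (1 - Real.exp w.re) ^ 2 + w.im ^ 2 * (Real.exp w.re - 1) ^ 2 := by
  rw [mul_pow, Complex.sq_norm, normSq_apply]
  ring

lemma sq_re_mul_norm_one_sub_exp_le (w : ℂ) :
    (w.re * ‖1 - exp w‖) ^ 2 ≤ (‖w‖ * (1 - Real.exp w.re)) ^ 2 := by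
  have hcos : 2 * (1 - Real.cos w.im) ≤ w.im ^ 2 := by
    linarith [Real.one_sub_sq_div_two_le_cos (x := w.im)]
  rw [mul_pow, sq_norm_one_sub_exp, sq_norm_mul_one_sub_exp_re]
  calc w.re ^ 2 * ((1 - Real.exp w.re) ^ 2 + 2 * Real.exp w.re * (1 - Real.cos w.im))
      = w.re ^ 2 * (1 - Real.exp w.re) ^ 2
          + w.re ^ 2 * Real.exp w.re * (2 * (1 - Real.cos w.im)) := by ring
    _ ≤ w.re ^ 2 * (1 - Real.exp w.re) ^ 2 + w.re ^ 2 * Real.exp w.re * w.im ^ 2 := by gcongr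
    _ ≤ w.re ^ 2 * (1 - Real.exp w.re) ^ 2 + (Real.exp w.re - 1) ^ 2 * w.im ^ 2 := by
      gcongr; exact Real.sq_mul_exp_le_exp_sub_one_sq w.re
    _ = w.re ^ 2 * (1 - Real.exp w.re) ^ 2 + w.im ^ 2 * (Real.exp w.re - 1) ^ 2 := by ring

lemma sq_re_mul_norm_one_sub_exp_lt (w : ℂ) (hre : w.re ≠ 0) (him : w.im ≠ 0) :
    (w.re * ‖1 - exp w‖) ^ 2 < (‖w‖ * (1 - Real.exp w.re)) ^ 2 := by
  have hcos : 2 * (1 - Real.cos w.im) < w.im ^ 2 := by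
    linarith [Real.one_sub_sq_div_two_lt_cos him]
  rw [mul_pow, sq_norm_one_sub_exp, sq_norm_mul_one_sub_exp_re]
  calc w.re ^ 2 * ((1 - Real.exp w.re) ^ 2 + 2 * Real.exp w.re * (1 - Real.cos w.im))
      = w.re ^ 2 * (1 - Real.exp w.re) ^ 2
          + w.re ^ 2 * Real.exp w.re * (2 * (1 - Real.cos w.im)) := by ring
    _ < w.re ^ 2 * (1 - Real.exp w.re) ^ 2 + w.re ^ 2 * Real.exp w.re * w.im ^ 2 := by gcongr
    _ ≤ w.re ^ 2 * (1 - Real.exp w.re) ^ 2 + (Real.exp w.re - 1) ^ 2 * w.im ^ 2 := by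
      gcongr; exact Real.sq_mul_exp_le_exp_sub_one_sq w.re
    _ = w.re ^ 2 * (1 - Real.exp w.re) ^ 2 + w.im ^ 2 * (Real.exp w.re - 1) ^ 2 := by ring

lemma neg_re_mul_norm_one_sub_exp_le (w : ℂ) (hre : w.re ≤ 0) :
    -w.re * ‖1 - exp w‖ ≤ ‖w‖ * (1 - ‖exp w‖) := by
  have hexp : 0 ≤ 1 - Real.exp w.re := by linarith [Real.exp_le_one_iff.mpr hre]
  rw [norm_exp, ← pow_le_pow_iff_left₀ (by nlinarith [norm_nonneg (1 - exp w)])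
    (by positivity) two_ne_zero, neg_mul, neg_sq]
  exact sq_re_mul_norm_one_sub_exp_le w

lemma neg_re_mul_norm_one_sub_exp_lt (w : ℂ) (hre : w.re < 0) (him : w.im ≠ 0) :
    -w.re * ‖1 - exp w‖ < ‖w‖ * (1 - ‖exp w‖) := by
  have hexp : 0 ≤ 1 - Real.exp w.re := by linarith [Real.exp_le_one_iff.mpr hre.le]
  rw [norm_exp, ← pow_lt_pow_iff_left₀ (by nlinarith [norm_nonneg (1 - exp w)])
    (by positivity) two_ne_zero, neg_mul, neg_sq]
  exact sq_re_mul_norm_one_sub_exp_lt w hre.ne him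

end Complex

/-- Inequality (cor): for `Re λ > 0` and `t > 0`,
`(Re λ/|λ|)·|1 - e^{-λt}| ≤ 1 - |e^{-λt}|`, with strict inequality if `Im λ ≠ 0`. -/
theorem exp_contraction_inequality
    (lam : ℂ) (hlam : 0 < lam.re) (t : ℝ) (ht : 0 < t) :
    lam.re / ‖lam‖ * ‖1 - Complex.exp (-lam * t)‖ ≤
      1 - ‖Complex.exp (-lam * t)‖ ∧
    (lam.im ≠ 0 →
      lam.re / ‖lam‖ * ‖1 - Complex.exp (-lam * t)‖ <
        1 - ‖Complex.exp (-lam * t)‖) := by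
  set w := -lam * t with hw
  have hw_re : w.re = -(lam.re * t) := by simp [hw]
  have hw_im : w.im = -(lam.im * t) := by simp [hw]
  have hw_norm : ‖w‖ = ‖lam‖ * t := by
    rw [hw, norm_mul, norm_neg, norm_real, Real.norm_of_nonneg ht.le]
  have hlam_ne : lam ≠ 0 := fun h ↦ by simp [h] at hlam
  have hw_norm_pos : 0 < ‖w‖ := by rw [hw_norm]; exact mul_pos (norm_pos_iff.mpr hlam_ne) ht
  have hw_re_neg : w.re < 0 := by rw [hw_re]; exact neg_neg_of_pos (mul_pos hlam ht)
  have hscale : lam.re / ‖lam‖ * ‖1 - exp w‖ = -w.re * ‖1 - exp w‖ / ‖w‖ := by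
    rw [hw_re, hw_norm]; field_simp
  rw [hscale, div_le_iff₀ hw_norm_pos, div_lt_iff₀ hw_norm_pos, mul_comm _ ‖w‖]
  refine ⟨neg_re_mul_norm_one_sub_exp_le w hw_re_neg.le, fun him ↦ ?_⟩
  have hw_im_ne : w.im ≠ 0 := by rw [hw_im]; exact neg_ne_zero.mpr (mul_ne_zero him ht.ne')
  exact neg_re_mul_norm_one_sub_exp_lt w hw_re_neg hw_im_ne
end

section
/- Let λ ∈ ℂ with Re λ > 0. Then the infimum over all t > 0 of the quantity (1 − |e^{−λt}|)/|1 − e^{−λt}| equals Re λ/|λ|. -/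
/-!
By the fundamental theorem of calculus, `1 - e^{-λt}` and `1 - |e^{-λt}|` are the integrals over
`[0, t]` of `λ e^{-λs}` and of `Re λ · |e^{-λs}|` respectively. Bounding the norm of the first integral by the
integral of the norm gives `|1 - e^{-λt}| ≤ |λ| ∫₀ᵗ |e^{-λs}| ds`, so the quotient is at least
`Re λ / |λ|` for every `t > 0`. Dividing numerator and denominator by `t`, they tend to the
derivatives `Re λ` and `|λ|` as `t → 0⁺`, so the bound is approached and is the infimum.
-/

open Complex Set Filter Topology

theorem HasDerivAt.tendsto_norm_sub_div_nhdsGT {E : Type*} [NormedAddCommGroup E]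
    [NormedSpace ℝ E] {f : ℝ → E} {f' : E} {x : ℝ} (h : HasDerivAt f f' x) :
    Tendsto (fun t => ‖f (x + t) - f x‖ / t) (𝓝[>] 0) (𝓝 ‖f'‖) := by
  refine h.tendsto_slope_zero_right.norm.congr' ?_
  filter_upwards [self_mem_nhdsWithin] with t (ht : 0 < t)
  rw [norm_smul, norm_inv, Real.norm_of_nonneg ht.le, inv_mul_eq_div]

namespace Complex

theorem norm_exp_neg_mul_ofReal (lam : ℂ) (s : ℝ) :
    ‖exp (-lam * s)‖ = Real.exp (-lam.re * s) := by
  simp [norm_exp, mul_re]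

theorem one_sub_exp_neg_mul_eq_integral (lam : ℂ) (t : ℝ) :
    1 - exp (-lam * t) = ∫ s in (0 : ℝ)..t, lam * exp (-lam * s) := by
  have hderiv (s : ℝ) : HasDerivAt (fun s : ℝ => -exp (-lam * s)) (lam * exp (-lam * s)) s := by
    simpa [mul_comm] using (((hasDerivAt_id s).ofReal_comp.const_mul (-lam)).cexp).fun_neg
  have hcont : Continuous fun s : ℝ => lam * exp (-lam * s) := by fun_prop
  rw [intervalIntegral.integral_eq_sub_of_hasDerivAt (fun s _ => hderiv s)
    (hcont.intervalIntegrable _ _)]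
  simp only [ofReal_zero, mul_zero, exp_zero]
  ring

theorem one_sub_norm_exp_neg_mul_eq_integral (lam : ℂ) (t : ℝ) :
    1 - ‖exp (-lam * t)‖ = ∫ s in (0 : ℝ)..t, lam.re * ‖exp (-lam * s)‖ := by
  simp only [norm_exp_neg_mul_ofReal]
  have hderiv (s : ℝ) :
      HasDerivAt (fun s => -Real.exp (-lam.re * s)) (lam.re * Real.exp (-lam.re * s)) s := by
    simpa [mul_comm] using (((hasDerivAt_id s).const_mul (-lam.re)).exp).fun_neg
  have hcont : Continuous fun s => lam.re * Real.exp (-lam.re * s) := by fun_prop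
  rw [intervalIntegral.integral_eq_sub_of_hasDerivAt (fun s _ => hderiv s)
    (hcont.intervalIntegrable _ _)]
  simp only [mul_zero, Real.exp_zero]
  ring

end Complex

noncomputable def expContractionQuotient (lam : ℂ) (t : ℝ) : ℝ :=
  (1 - ‖exp (-lam * t)‖) / ‖1 - exp (-lam * t)‖

theorem re_div_norm_le_expContractionQuotient {lam : ℂ} (hlam : 0 < lam.re) {t : ℝ}
    (ht : 0 < t) : lam.re / ‖lam‖ ≤ expContractionQuotient lam t := by
  set I := ∫ s in (0 : ℝ)..t, ‖exp (-lam * s)‖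
  have hnum : 1 - ‖exp (-lam * t)‖ = lam.re * I := by
    rw [one_sub_norm_exp_neg_mul_eq_integral, intervalIntegral.integral_const_mul]
  have hden : ‖1 - exp (-lam * t)‖ ≤ ‖lam‖ * I :=
    calc ‖1 - exp (-lam * t)‖ = ‖∫ s in (0 : ℝ)..t, lam * exp (-lam * s)‖ := by
          rw [one_sub_exp_neg_mul_eq_integral]
      _ ≤ ∫ s in (0 : ℝ)..t, ‖lam * exp (-lam * s)‖ :=
          intervalIntegral.norm_integral_le_integral_norm ht.le
      _ = ‖lam‖ * I := by simp only [norm_mul, intervalIntegral.integral_const_mul, I]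
  have hnum_pos : 0 < 1 - ‖exp (-lam * t)‖ := by
    rw [norm_exp_neg_mul_ofReal, sub_pos, Real.exp_lt_one_iff]
    nlinarith
  have hden_pos : 0 < ‖1 - exp (-lam * t)‖ :=
    hnum_pos.trans_le (by simpa using norm_sub_norm_le 1 (exp (-lam * t)))
  have hI : 0 < I := pos_of_mul_pos_right (hnum ▸ hnum_pos) hlam.le
  calc lam.re / ‖lam‖ = lam.re * I / (‖lam‖ * I) := (mul_div_mul_right _ _ hI.ne').symm
    _ ≤ lam.re * I / ‖1 - exp (-lam * t)‖ :=
        div_le_div_of_nonneg_left (by positivity) hden_pos hden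
    _ = expContractionQuotient lam t := by rw [expContractionQuotient, hnum]

theorem tendsto_expContractionQuotient_nhdsGT_zero {lam : ℂ} (hlam : lam ≠ 0) :
    Tendsto (expContractionQuotient lam) (𝓝[>] 0) (𝓝 (lam.re / ‖lam‖)) := by
  have hexp : HasDerivAt (fun t : ℝ => exp (-lam * t)) (-lam) 0 := by
    simpa using ((hasDerivAt_id (0 : ℝ)).ofReal_comp.const_mul (-lam)).cexp
  have hnorm_exp : HasDerivAt (fun t : ℝ => ‖exp (-lam * t)‖) (-lam.re) 0 := by
    simp only [norm_exp_neg_mul_ofReal]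
    simpa using ((hasDerivAt_id (0 : ℝ)).const_mul (-lam.re)).exp
  have hnum := hnorm_exp.tendsto_slope_zero_right.neg
  have hden := hexp.tendsto_norm_sub_div_nhdsGT
  rw [neg_neg] at hnum
  rw [norm_neg] at hden
  refine (hnum.div hden (norm_ne_zero_iff.2 hlam)).congr' ?_
  filter_upwards [self_mem_nhdsWithin] with t (ht : 0 < t)
  simp only [Pi.div_apply, zero_add, ofReal_zero, mul_zero, exp_zero, norm_one, smul_eq_mul]
  rw [expContractionQuotient, norm_sub_rev,
    ← div_div_div_cancel_right₀ ht.ne' (1 - ‖exp (-lam * t)‖)]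
  congr 1
  ring

/-- For `Re λ > 0`, the infimum over `t > 0` of
`(1 - |e^{-λt}|)/|1 - e^{-λt}|` equals `Re λ/|λ|`. -/
theorem exp_contraction_quotient_inf
    (lam : ℂ) (hlam : 0 < lam.re) :
    sInf ((fun t : ℝ =>
        (1 - ‖Complex.exp (-lam * t)‖) /
          ‖1 - Complex.exp (-lam * t)‖) '' Ioi (0 : ℝ)) =
      lam.re / ‖lam‖ := by
  have hlam0 : lam ≠ 0 := fun h => by simp [h] at hlam
  have hlower : lam.re / ‖lam‖ ∈ lowerBounds (expContractionQuotient lam '' Ioi 0) := by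
    rintro _ ⟨t, ht, rfl⟩
    exact re_div_norm_le_expContractionQuotient hlam ht
  have hclosure : lam.re / ‖lam‖ ∈ closure (expContractionQuotient lam '' Ioi 0) :=
    mem_closure_of_tendsto (tendsto_expContractionQuotient_nhdsGT_zero hlam0)
      (eventually_mem_nhdsWithin.mono fun t ht => mem_image_of_mem _ ht)
  exact (isGLB_of_mem_closure hlower hclosure).csInf_eq ⟨_, mem_image_of_mem _ (mem_Ioi.2 one_pos)⟩
end
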